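/- Let A be a unital alternative *-algebra over ℂ containing a nontrivial symmetric idempotent e satisfying conditions (♠) and (♣), and let Φ : A → A be a map satisfying the *-Jordan n-derivation identity in the last two slots. Then for all i ≠ j in {1,2} and all a_{ij}, b_{ij} ∈ A_{ij} one has Φ(a_{ij} + b_{ij}) = Φ(a_{ij}) + Φ(b_{ij}). -/

import Mathlib

/-- The Jordan `•`-product `a • b = ab + b a*`. -/
def starJordan {A : Type*} [NonAssocRing A] [StarRing A] (a b : A) : A :=
  a * b + b * star a

/-- Left-normed iterated Jordan `•`-product of a list (empty list ↦ 0, junk value). -/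
def leftStarJordan {A : Type*} [NonAssocRing A] [StarRing A] : List A → A
  | [] => 0
  | x :: xs => xs.foldl starJordan x

/-- The family `a₁ = ⋯ = a_{n-2} = 1`, `a_{n-1} = x`, `a_n = y`. -/
def lastTwoFamily {A : Type*} [One A] (n : ℕ) (x y : A) : Fin n → A :=
  fun i => if (i : ℕ) = n - 2 then x else if (i : ℕ) = n - 1 then y else 1

/-- `e₁ = e`, `e₂ = 1 - e`. -/
def peirceIdem {A : Type*} [NonAssocRing A] (e : A) : Fin 2 → A :=
  fun i => if i = 0 then e else 1 - e

/-- Membership in the Peirce component `A_{ij}`: `eᵢ x = x` and `x eⱼ = x`. -/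
def inPeirce {A : Type*} [NonAssocRing A] (e : A) (i j : Fin 2) (x : A) : Prop :=
  peirceIdem e i * x = x ∧ x * peirceIdem e j = x

/-- The inner derivation `Ξ_{y,z}(a) = y(za) − z(ya) + y(az) − (ya)z + (az)y − (ay)z`. -/
def innerDer {A : Type*} [NonAssocRing A] (y z a : A) : A :=
  y * (z * a) - z * (y * a) + y * (a * z) - (y * a) * z + (a * z) * y - (a * y) * z

/-!
With `M = 2^(n-2)` the hypothesis says `Φ (M (x • y)) = B x y + M (Φ x • y + x • Φ y)` for a
biadditive `B` (the `n - 2` leading units contribute the factor `M`, the terms with `Φ 1` form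
`B`). Hence the additivity defect `δ x y = Φ (x + y) - Φ x - Φ y` satisfies
`δ (M (x • y)) (M (x' • y)) = M (δ x x' • y)`, and symmetrically in the second slot.

For `a, b ∈ A₁₂` all four Peirce components of `δ a b` vanish. The diagonal ones do because
`δ a b = M (f • δ (a / M) (b / M))` both for `f = e` and for `f = 1 - e`. The `A₂₁` one does
because `u • r = 0` for `u ∈ A₁₂`, `r ∈ A₁₁`, so `δ x u • r = 0`, so `(δ x u)₂₁ r = 0`, and (♠)
kills `(δ x u)₂₁`. Finally `δ a b = δ a (b + b*) + δ b b* - δ (a + b) b*`: the last two terms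
have no `A₁₂` component by the previous step applied to `1 - e` and (♣), and the first has none
because `(b + b*) • (2e - 1) = 0` makes its `A₁₂` component the adjoint of its `A₂₁` component,
which vanishes by the previous step.

Peirce indices are elements of `Fin 2`: the paper's index `1` (idempotent `e`) is `0` here, and
its index `2` (idempotent `1 - e`) is `1`.
-/

class IsAlternative (A : Type*) [Mul A] : Prop where
  left_alternative (a b : A) : a * a * b = a * (a * b)
  right_alternative (a b : A) : b * a * a = b * (a * a)

section Alternative

variable {A : Type*} [NonUnitalNonAssocRing A] [IsAlternative A]

theorem associator_swap_left (x y z : A) : associator y x z = -associator x y z := by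
  have h := IsAlternative.left_alternative (x + y) z
  simp only [add_mul, mul_add, IsAlternative.left_alternative] at h
  simp only [associator_apply]
  linear_combination (norm := abel) h

theorem associator_swap_right (x y z : A) : associator x z y = -associator x y z := by
  have h := IsAlternative.right_alternative (y + z) x
  simp only [add_mul, mul_add, IsAlternative.right_alternative] at h
  simp only [associator_apply]
  linear_combination (norm := abel) h

theorem IsAlternative.flexible (a x : A) : a * x * a = a * (x * a) := by
  have h := associator_swap_left x a a
  rw [associator_apply x, IsAlternative.right_alternative, sub_self, neg_zero,
    associator_apply, sub_eq_zero] at h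
  exact h

theorem mul_mul_eq_zsmul {e u v : A} {p q p' q' : ℤ} (hu : e * u = p • u) (hu' : u * e = q • u)
    (hv : e * v = p' • v) (hv' : v * e = q' • v) :
    e * (u * v) = (p + q - p') • (u * v) ∧ u * v * e = (q' - q + p') • (u * v) := by
  have hl := associator_swap_left u e v
  have hr := associator_swap_right u e v
  simp only [associator_apply, hu, hu', hv, hv', smul_mul_assoc, mul_smul_comm] at hl hr
  simp only [add_smul, sub_smul]
  constructor
  · linear_combination (norm := abel) -hl
  · linear_combination (norm := abel) hr

theorem eq_zero_of_idem_mul_eq_zsmul [IsAddTorsionFree A] {e w : A} {c : ℤ}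
    (he : IsIdempotentElem e) (h : e * w = c • w) (hc₀ : c ≠ 0) (hc₁ : c ≠ 1) : w = 0 := by
  have hee := IsAlternative.left_alternative e w
  rw [he.eq, h, mul_smul_comm, h, smul_smul] at hee
  have hc : c * c - c ≠ 0 := by rw [← mul_sub_one]; exact mul_ne_zero hc₀ (sub_ne_zero.2 hc₁)
  exact (smul_eq_zero.1 (by rw [sub_smul, ← hee, sub_self])).resolve_left hc

theorem eq_zero_of_mul_idem_eq_zsmul [IsAddTorsionFree A] {e w : A} {c : ℤ}
    (he : IsIdempotentElem e) (h : w * e = c • w) (hc₀ : c ≠ 0) (hc₁ : c ≠ 1) : w = 0 := by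
  have hee := IsAlternative.right_alternative e w
  rw [he.eq, h, smul_mul_assoc, h, smul_smul] at hee
  have hc : c * c - c ≠ 0 := by rw [← mul_sub_one]; exact mul_ne_zero hc₀ (sub_ne_zero.2 hc₁)
  exact (smul_eq_zero.1 (by rw [sub_smul, hee, sub_self])).resolve_left hc

end Alternative

section PeirceIdem

variable {A : Type*} [NonAssocRing A] {e : A}

@[simp] theorem peirceIdem_zero (e : A) : peirceIdem e 0 = e := rfl
@[simp] theorem peirceIdem_one (e : A) : peirceIdem e 1 = 1 - e := rfl

theorem peirceIdem_one_sub (e : A) (i : Fin 2) : peirceIdem (1 - e) i = peirceIdem e i.rev := by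
  fin_cases i <;> simp [Fin.rev]

theorem star_peirceIdem [StarRing A] (hse : IsSelfAdjoint e) (i : Fin 2) :
    star (peirceIdem e i) = peirceIdem e i := by
  fin_cases i <;> simp [hse.star_eq]

theorem inPeirce_one_sub_iff {i j : Fin 2} {x : A} :
    inPeirce (1 - e) i j x ↔ inPeirce e i.rev j.rev x := by
  simp only [inPeirce, peirceIdem_one_sub]

def peirceEigen (i : Fin 2) : ℤ := if i = 0 then 1 else 0

theorem inPeirce_iff {i j : Fin 2} {x : A} :
    inPeirce e i j x ↔ e * x = peirceEigen i • x ∧ x * e = peirceEigen j • x := by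
  fin_cases i <;> fin_cases j <;>
    simp [inPeirce, peirceEigen, sub_mul, mul_sub, sub_eq_self]

variable (e) in
def peirceProj (i j : Fin 2) : A →+ A :=
  (AddMonoidHom.mulRight (peirceIdem e j)).comp (AddMonoidHom.mulLeft (peirceIdem e i))

theorem peirceProj_apply (i j : Fin 2) (x : A) :
    peirceProj e i j x = peirceIdem e i * x * peirceIdem e j := rfl

theorem sum_peirceProj (x : A) : ∑ i, ∑ j, peirceProj e i j x = x := by
  simp only [Fin.sum_univ_two, peirceProj_apply, ← mul_add, peirceIdem_zero, peirceIdem_one,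
    add_sub_cancel, mul_one, ← add_mul, one_mul]

theorem eq_zero_of_peirceProj_eq_zero {x : A} (h : ∀ i j, peirceProj e i j x = 0) : x = 0 := by
  rw [← sum_peirceProj (e := e) x]
  simp [h]

theorem peirceProj_one_sub (i j : Fin 2) (x : A) :
    peirceProj (1 - e) i j x = peirceProj e i.rev j.rev x := by
  simp only [peirceProj_apply, peirceIdem_one_sub]

theorem inPeirce.star [StarRing A] (hse : IsSelfAdjoint e) {i j : Fin 2} {x : A}
    (hx : inPeirce e i j x) : inPeirce e j i (star x) := by
  constructor
  · rw [← star_peirceIdem hse, ← star_mul, hx.2]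
  · rw [← star_peirceIdem hse, ← star_mul, hx.1]

theorem inPeirce.of_nsmul [IsAddTorsionFree A] {i j : Fin 2} {M : ℕ} (hM : M ≠ 0) {x : A}
    (hx : inPeirce e i j (M • x)) : inPeirce e i j x := by
  constructor
  · exact nsmul_right_injective hM (by simpa only [mul_smul_comm] using hx.1)
  · exact nsmul_right_injective hM (by simpa only [smul_mul_assoc] using hx.2)

end PeirceIdem

section Peirce

variable {A : Type*} [NonAssocRing A] [IsAlternative A] {e : A}

theorem peirceIdem_mul_peirceIdem_mul (he : IsIdempotentElem e) (i k : Fin 2) (x : A) :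
    peirceIdem e i * (peirceIdem e k * x) = if i = k then peirceIdem e i * x else 0 := by
  have hee : e * (e * x) = e * x := by rw [← IsAlternative.left_alternative, he.eq]
  fin_cases i <;> fin_cases k <;> simp [sub_mul, mul_sub, hee]

theorem mul_peirceIdem_mul_peirceIdem (he : IsIdempotentElem e) (k j : Fin 2) (x : A) :
    x * peirceIdem e k * peirceIdem e j = if k = j then x * peirceIdem e j else 0 := by
  have hee : x * e * e = x * e := by rw [IsAlternative.right_alternative, he.eq]
  fin_cases k <;> fin_cases j <;> simp [sub_mul, mul_sub, hee]

theorem peirceIdem_mul_mul_peirceIdem (i j : Fin 2) (x : A) :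
    peirceIdem e i * (x * peirceIdem e j) = peirceIdem e i * x * peirceIdem e j := by
  fin_cases i <;> fin_cases j <;> simp [sub_mul, mul_sub, IsAlternative.flexible]

theorem inPeirce_peirceProj (he : IsIdempotentElem e) (i j : Fin 2) (x : A) :
    inPeirce e i j (peirceProj e i j x) := by
  constructor
  · rw [peirceProj_apply, ← peirceIdem_mul_mul_peirceIdem, peirceIdem_mul_peirceIdem_mul he,
      if_pos rfl, peirceIdem_mul_mul_peirceIdem]
  · rw [peirceProj_apply, mul_peirceIdem_mul_peirceIdem he, if_pos rfl]

theorem peirceIdem_mul_of_inPeirce (he : IsIdempotentElem e) {k l : Fin 2} {y : A}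
    (hy : inPeirce e k l y) (i : Fin 2) : peirceIdem e i * y = if i = k then y else 0 := by
  conv_lhs => rw [← hy.1]
  rw [peirceIdem_mul_peirceIdem_mul he]
  split_ifs with h
  · rw [h, hy.1]
  · rfl

theorem mul_peirceIdem_of_inPeirce (he : IsIdempotentElem e) {k l : Fin 2} {y : A}
    (hy : inPeirce e k l y) (j : Fin 2) : y * peirceIdem e j = if l = j then y else 0 := by
  conv_lhs => rw [← hy.2]
  rw [mul_peirceIdem_mul_peirceIdem he]
  split_ifs with h
  · rw [← h, hy.2]
  · rfl

theorem peirceProj_of_inPeirce (he : IsIdempotentElem e) {k l : Fin 2} {y : A}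
    (hy : inPeirce e k l y) (i j : Fin 2) :
    peirceProj e i j y = if i = k ∧ j = l then y else 0 := by
  rw [peirceProj_apply, peirceIdem_mul_of_inPeirce he hy]
  by_cases hik : i = k
  · rw [if_pos hik, mul_peirceIdem_of_inPeirce he hy]
    simp [hik, eq_comm]
  · simp [hik]

theorem peirceProj_mul_peirceIdem (he : IsIdempotentElem e) (i j k : Fin 2) (x : A) :
    peirceProj e i j (x * peirceIdem e k) = if k = j then peirceProj e i j x else 0 := by
  rw [peirceProj_apply, peirceIdem_mul_mul_peirceIdem, mul_peirceIdem_mul_peirceIdem he]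
  rfl

theorem peirceProj_peirceIdem_mul (he : IsIdempotentElem e) (i j k : Fin 2) (x : A) :
    peirceProj e i j (peirceIdem e k * x) = if i = k then peirceProj e i j x else 0 := by
  rw [peirceProj_apply, peirceIdem_mul_peirceIdem_mul he]
  split_ifs <;> simp [peirceProj_apply]

theorem star_peirceProj [StarRing A] (hse : IsSelfAdjoint e) (i j : Fin 2) (x : A) :
    star (peirceProj e i j x) = peirceProj e j i (star x) := by
  rw [peirceProj_apply, peirceProj_apply, star_mul, star_mul, star_peirceIdem hse,
    star_peirceIdem hse, peirceIdem_mul_mul_peirceIdem]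

theorem inPeirce.mul {i j k : Fin 2} {u v : A} (hu : inPeirce e i j u) (hv : inPeirce e j k v) :
    inPeirce e i k (u * v) := by
  rw [inPeirce_iff] at *
  obtain ⟨hl, hr⟩ := mul_mul_eq_zsmul hu.1 hu.2 hv.1 hv.2
  exact ⟨by rw [hl, add_sub_cancel_right], by rw [hr, sub_add_cancel]⟩

theorem inPeirce.mul_self {i j : Fin 2} {u v : A} (hu : inPeirce e i j u)
    (hv : inPeirce e i j v) : inPeirce e j i (u * v) := by
  rw [inPeirce_iff] at *
  obtain ⟨hl, hr⟩ := mul_mul_eq_zsmul hu.1 hu.2 hv.1 hv.2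
  exact ⟨by rw [hl, add_sub_cancel_left], by rw [hr, sub_self, zero_add]⟩

theorem inPeirce.mul_eq_zero [IsAddTorsionFree A] (he : IsIdempotentElem e) {i j k l : Fin 2}
    {u v : A} (hu : inPeirce e i j u) (hv : inPeirce e k l v) (hjk : j ≠ k)
    (h : i = j ∨ k = l) : u * v = 0 := by
  rw [inPeirce_iff] at hu hv
  obtain ⟨hl, hr⟩ := mul_mul_eq_zsmul hu.1 hu.2 hv.1 hv.2
  rcases h with rfl | rfl
  · refine eq_zero_of_idem_mul_eq_zsmul he hl ?_ ?_ <;>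
      fin_cases i <;> fin_cases k <;> simp_all [peirceEigen]
  · refine eq_zero_of_mul_idem_eq_zsmul he hr ?_ ?_ <;>
      fin_cases j <;> fin_cases k <;> simp_all [peirceEigen]

theorem starJordan_peirceIdem_of_inPeirce_zero_one [StarRing A] (he : IsIdempotentElem e)
    (hse : IsSelfAdjoint e) {y : A} (hy : inPeirce e 0 1 y) (l : Fin 2) :
    starJordan (peirceIdem e l) y = y := by
  rw [starJordan, star_peirceIdem hse, peirceIdem_mul_of_inPeirce he hy,
    mul_peirceIdem_of_inPeirce he hy]
  fin_cases l <;> simp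

theorem eq_zero_of_inPeirce_one_zero [IsAddTorsionFree A] (he : IsIdempotentElem e)
    (hsp : ∀ x : A, (∀ r : A, x * r * e = 0) → x = 0) {w : A} (hw : inPeirce e 1 0 w)
    (hwr : ∀ r, inPeirce e 0 0 r → w * r = 0) : w = 0 := by
  refine hsp w fun r => ?_
  have mul_e_eq_zero : ∀ {i} {y : A}, inPeirce e i 1 y → y * e = 0 := fun hy => by
    simpa using mul_peirceIdem_of_inPeirce he hy 0
  have hcomp : ∀ k l, w * peirceProj e k l r * e = 0 := by
    intro k l
    have hr := inPeirce_peirceProj he k l r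
    fin_cases k <;> fin_cases l
    · rw [hwr _ hr, zero_mul]
    · exact mul_e_eq_zero (hw.mul hr)
    · exact mul_e_eq_zero (hw.mul_self hr)
    · rw [hw.mul_eq_zero he hr (by decide) (Or.inr rfl), zero_mul]
  rw [← sum_peirceProj (e := e) r]
  simp only [Finset.mul_sum, Finset.sum_mul, hcomp, Finset.sum_const_zero]

end Peirce

theorem Fin.update_append_castAdd {α : Type*} {m n : ℕ} (a : Fin m → α) (b : Fin n → α)
    (i : Fin m) (v : α) :
    Function.update (Fin.append a b) (Fin.castAdd n i) v =
      Fin.append (Function.update a i v) b := by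
  funext k
  refine Fin.addCases (fun k => ?_) (fun k => ?_) k
  · simp [Function.update_apply, Fin.append_left, Fin.ext_iff]
  · simp [Function.update_apply, Fin.append_right, Fin.ext_iff]
    omega

theorem Fin.update_append_natAdd {α : Type*} {m n : ℕ} (a : Fin m → α) (b : Fin n → α)
    (i : Fin n) (v : α) :
    Function.update (Fin.append a b) (Fin.natAdd m i) v =
      Fin.append a (Function.update b i v) := by
  funext k
  refine Fin.addCases (fun k => ?_) (fun k => ?_) k
  · simp [Function.update_apply, Fin.append_left, Fin.ext_iff]
    omega
  · simp [Function.update_apply, Fin.append_right, Fin.ext_iff]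

theorem lastTwoFamily_eq_append {A : Type*} [One A] (m : ℕ) (x y : A) :
    lastTwoFamily (m + 2) x y = Fin.append (fun _ : Fin m => 1) ![x, y] := by
  funext k
  refine Fin.addCases (fun k => ?_) (fun k => ?_) k
  · simp only [lastTwoFamily, Fin.append_left, Fin.val_castAdd]
    rw [if_neg (by omega), if_neg (by omega)]
  · fin_cases k <;> simp [lastTwoFamily, Fin.append_right]

def addDefect {A : Type*} [AddCommGroup A] (Φ : A → A) (x y : A) : A := Φ (x + y) - Φ x - Φ y

theorem addDefect_comm {A : Type*} [AddCommGroup A] (Φ : A → A) (x y : A) :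
    addDefect Φ x y = addDefect Φ y x := by
  rw [addDefect, addDefect, add_comm, sub_right_comm]

section StarJordan

variable {A : Type*} [NonAssocRing A] [StarRing A]

def starJordanHom : A →+ A →+ A :=
  AddMonoidHom.mul + AddMonoidHom.mul.flip.comp (starAddEquiv : A ≃+ A).toAddMonoidHom

@[simp] theorem starJordanHom_apply (x y : A) : starJordanHom x y = starJordan x y := rfl

theorem starJordan_nsmul_left (k : ℕ) (x y : A) : starJordan (k • x) y = k • starJordan x y := by
  simp only [← starJordanHom_apply, map_nsmul, AddMonoidHom.nsmul_apply]

theorem one_starJordan (x : A) : starJordan 1 x = 2 • x := by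
  simp only [starJordan, one_mul, star_one, mul_one, two_nsmul]

theorem leftStarJordan_append_pair {l : List A} (hl : l ≠ []) (x y : A) :
    leftStarJordan (l ++ [x, y]) = starJordan (starJordan (leftStarJordan l) x) y := by
  obtain ⟨c, cs, rfl⟩ := List.exists_cons_of_ne_nil hl
  simp [leftStarJordan, List.foldl_append]

theorem foldl_starJordan_replicate_one (k : ℕ) {z : A} (hz : IsSelfAdjoint z) :
    (List.replicate k 1).foldl starJordan z = 2 ^ k • z := by
  induction k generalizing z with
  | zero => simp
  | succ k ih =>
    have hz2 : starJordan z 1 = z + z := by simp only [starJordan, mul_one, one_mul, hz.star_eq]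
    rw [List.replicate_succ, List.foldl_cons, hz2, ih (hz.add hz), ← two_nsmul, smul_smul,
      pow_succ]

theorem leftStarJordan_replicate_one_append_pair (m : ℕ) (x y : A) :
    leftStarJordan (List.replicate m 1 ++ [x, y]) = 2 ^ m • starJordan x y := by
  cases m with
  | zero => simp [leftStarJordan]
  | succ k =>
    rw [leftStarJordan_append_pair (by simp), List.replicate_succ, leftStarJordan,
      foldl_starJordan_replicate_one k (.one A), starJordan_nsmul_left, one_starJordan,
      smul_smul, starJordan_nsmul_left, ← pow_succ]

def HasScaledLeibniz (M : ℕ) (Φ : A → A) : Prop :=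
  ∃ B : A →+ A →+ A, ∀ x y : A,
    Φ (M • starJordan x y) = B x y + M • (starJordan (Φ x) y + starJordan x (Φ y))

theorem hasScaledLeibniz_of_lastTwoFamily {m : ℕ} {Φ : A → A}
    (hΦ : ∀ x y : A,
      Φ (leftStarJordan (List.ofFn (lastTwoFamily (m + 2) x y))) =
        ∑ k : Fin (m + 2), leftStarJordan (List.ofFn
          (Function.update (lastTwoFamily (m + 2) x y) k (Φ (lastTwoFamily (m + 2) x y k))))) :
    HasScaledLeibniz (2 ^ m) Φ := by
  refine ⟨∑ i : Fin m, starJordanHom.comp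
    (starJordanHom (leftStarJordan (List.ofFn (Function.update (fun _ => 1) i (Φ 1))))),
    fun x y => ?_⟩
  have h := hΦ x y
  simp only [lastTwoFamily_eq_append, Fin.sum_univ_add, Fin.update_append_castAdd,
    Fin.update_append_natAdd, List.ofFn_fin_append, Fin.append_left, Fin.append_right,
    List.ofFn_const, Fin.sum_univ_two] at h
  simp only [List.ofFn_succ, List.ofFn_zero, Matrix.cons_val_zero, Matrix.cons_val_one,
    Function.update_self, Function.update_of_ne, Fin.succ_ne_zero, zero_ne_one, ne_eq,
    not_false_eq_true, Fin.succ_zero_eq_one, Matrix.cons_val_succ, Matrix.cons_val_fin_one,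
    Fin.isValue, leftStarJordan_replicate_one_append_pair] at h
  rw [h, smul_add, AddMonoidHom.finsetSum_apply, AddMonoidHom.finsetSum_apply]
  congr 1
  refine Finset.sum_congr rfl fun i _ => ?_
  rw [leftStarJordan_append_pair (mt List.ofFn_eq_nil_iff.1 (Fin.pos i).ne')]
  rfl

namespace HasScaledLeibniz

variable {M : ℕ} {Φ : A → A}

theorem map_zero (hΦ : HasScaledLeibniz M Φ) : Φ 0 = 0 := by
  obtain ⟨B, hB⟩ := hΦ
  simpa [starJordan] using hB 0 0

theorem addDefect_starJordan_right (hΦ : HasScaledLeibniz M Φ) (x y y' : A) :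
    addDefect Φ (M • starJordan x y) (M • starJordan x y') =
      M • starJordan x (addDefect Φ y y') := by
  obtain ⟨B, hB⟩ := hΦ
  have h := hB x (y + y')
  simp only [addDefect, ← starJordanHom_apply, map_add, map_sub, smul_add, smul_sub] at h hB ⊢
  rw [h, hB, hB]
  abel

theorem addDefect_starJordan_left (hΦ : HasScaledLeibniz M Φ) (x x' y : A) :
    addDefect Φ (M • starJordan x y) (M • starJordan x' y) =
      M • starJordan (addDefect Φ x x') y := by
  obtain ⟨B, hB⟩ := hΦ
  have h := hB (x + x') y
  simp only [addDefect, ← starJordanHom_apply, map_add, map_sub, smul_add, smul_sub,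
    AddMonoidHom.add_apply, AddMonoidHom.sub_apply] at h hB ⊢
  rw [h, hB, hB]
  abel

theorem starJordan_addDefect_eq_zero [IsAddTorsionFree A] (hΦ : HasScaledLeibniz M Φ)
    (hM : M ≠ 0) {x x' y : A} (h : starJordan x' y = 0) :
    starJordan (addDefect Φ x x') y = 0 := by
  have hd := hΦ.addDefect_starJordan_left x x' y
  rw [h, smul_zero, addDefect, add_zero, hΦ.map_zero, sub_self, sub_zero] at hd
  exact (smul_eq_zero.1 hd.symm).resolve_left hM

end HasScaledLeibniz

end StarJordan

section OffDiagonal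

variable {A : Type*} [NonAssocRing A] [StarRing A] [IsAlternative A] [IsAddTorsionFree A]
  {e : A} {M : ℕ} {Φ : A → A}

theorem peirceProj_one_zero_addDefect_eq_zero (hΦ : HasScaledLeibniz M Φ) (hM : M ≠ 0)
    (he : IsIdempotentElem e) (hse : IsSelfAdjoint e)
    (hsp : ∀ x : A, (∀ r : A, x * r * e = 0) → x = 0) (x : A) {u : A} (hu : inPeirce e 0 1 u) :
    peirceProj e 1 0 (addDefect Φ x u) = 0 := by
  set K := addDefect Φ x u
  refine eq_zero_of_inPeirce_one_zero he hsp (inPeirce_peirceProj he 1 0 K) fun r hr => ?_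
  have hKr : K * r + r * star K = 0 := by
    refine hΦ.starJordan_addDefect_eq_zero hM ?_
    rw [starJordan, hu.mul_eq_zero he hr (by decide) (Or.inr rfl),
      hr.mul_eq_zero he (hu.star hse) (by decide) (Or.inl rfl), add_zero]
  have hK : K * r = peirceProj e 0 0 K * r + peirceProj e 1 0 K * r := by
    conv_lhs => rw [← sum_peirceProj (e := e) K]
    simp only [Fin.sum_univ_two, add_mul,
      (inPeirce_peirceProj he _ 1 K).mul_eq_zero he hr (by decide) (Or.inr rfl), add_zero]
  have hK' : r * star K = r * peirceProj e 0 0 (star K) + r * peirceProj e 0 1 (star K) := by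
    conv_lhs => rw [← sum_peirceProj (e := e) (star K)]
    simp only [Fin.sum_univ_two, mul_add,
      hr.mul_eq_zero he (inPeirce_peirceProj he 1 _ (star K)) (by decide) (Or.inl rfl), add_zero]
  have h10 := congrArg (peirceProj e 1 0) hKr
  rw [hK, hK', map_add, map_add, map_add, map_zero,
    peirceProj_of_inPeirce he ((inPeirce_peirceProj he 0 0 K).mul hr),
    peirceProj_of_inPeirce he ((inPeirce_peirceProj he 1 0 K).mul hr),
    peirceProj_of_inPeirce he (hr.mul (inPeirce_peirceProj he 0 0 (star K))),
    peirceProj_of_inPeirce he (hr.mul (inPeirce_peirceProj he 0 1 (star K)))] at h10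
  simpa using h10

theorem peirceProj_self_addDefect_eq_zero (hΦ : HasScaledLeibniz M Φ) (hM : M ≠ 0)
    (hdiv : ∀ a : A, ∃ a', M • a' = a) (he : IsIdempotentElem e) (hse : IsSelfAdjoint e)
    {a b : A} (ha : inPeirce e 0 1 a) (hb : inPeirce e 0 1 b) (k : Fin 2) :
    peirceProj e k k (addDefect Φ a b) = 0 := by
  obtain ⟨a', rfl⟩ := hdiv a
  obtain ⟨b', rfl⟩ := hdiv b
  have hD : addDefect Φ (M • a') (M • b') =
      M • starJordan (peirceIdem e k.rev) (addDefect Φ a' b') := by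
    rw [← hΦ.addDefect_starJordan_right,
      starJordan_peirceIdem_of_inPeirce_zero_one he hse (ha.of_nsmul hM),
      starJordan_peirceIdem_of_inPeirce_zero_one he hse (hb.of_nsmul hM)]
  rw [hD, map_nsmul, starJordan, star_peirceIdem hse, map_add, peirceProj_peirceIdem_mul he,
    peirceProj_mul_peirceIdem he]
  fin_cases k <;> simp [Fin.rev]

theorem peirceProj_zero_one_addDefect_add_star_eq_zero (hΦ : HasScaledLeibniz M Φ)
    (hM : M ≠ 0) (he : IsIdempotentElem e) (hse : IsSelfAdjoint e)
    (hsp : ∀ x : A, (∀ r : A, x * r * e = 0) → x = 0)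
    {a b : A} (ha : inPeirce e 0 1 a) (hb : inPeirce e 0 1 b) :
    peirceProj e 0 1 (addDefect Φ a (b + star b)) = 0 := by
  have hbs := hb.star hse
  have hZ : starJordan (addDefect Φ a (b + star b)) (peirceIdem e 0 - peirceIdem e 1) = 0 := by
    refine hΦ.starJordan_addDefect_eq_zero hM ?_
    have heb : e * b = b := by simpa using peirceIdem_mul_of_inPeirce he hb 0
    have hbe : b * e = 0 := by simpa using mul_peirceIdem_of_inPeirce he hb 0
    have hebs : e * star b = 0 := by simpa using peirceIdem_mul_of_inPeirce he hbs 0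
    have hbse : star b * e = star b := by simpa using mul_peirceIdem_of_inPeirce he hbs 0
    simp only [starJordan, star_add, star_star, peirceIdem_zero, peirceIdem_one, mul_sub,
      sub_mul, mul_add, add_mul, mul_one, one_mul, heb, hbe, hebs, hbse]
    abel
  have hZ10 : peirceProj e 1 0 (addDefect Φ a (b + star b)) = 0 := by
    rw [addDefect_comm]
    exact peirceProj_one_zero_addDefect_eq_zero hΦ hM he hse hsp _ ha
  have h01 := congrArg (peirceProj e 0 1) hZ
  simp only [starJordan, mul_sub, sub_mul, map_add, map_sub, peirceProj_mul_peirceIdem he,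
    peirceProj_peirceIdem_mul he, ← star_peirceProj hse, hZ10, star_zero] at h01
  simpa using h01

theorem addDefect_eq_zero_of_inPeirce_zero_one (hΦ : HasScaledLeibniz M Φ) (hM : M ≠ 0)
    (hdiv : ∀ a : A, ∃ a', M • a' = a) (he : IsIdempotentElem e) (hse : IsSelfAdjoint e)
    (hsp : ∀ x : A, (∀ r : A, x * r * e = 0) → x = 0)
    (hcl : ∀ x : A, (∀ r : A, x * r * (1 - e) = 0) → x = 0)
    {a b : A} (ha : inPeirce e 0 1 a) (hb : inPeirce e 0 1 b) : addDefect Φ a b = 0 := by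
  have hbs : inPeirce (1 - e) 0 1 (star b) := inPeirce_one_sub_iff.2 (hb.star hse)
  have hS : ∀ x, peirceProj e 0 1 (addDefect Φ x (star b)) = 0 := fun x => by
    simpa [peirceProj_one_sub] using peirceProj_one_zero_addDefect_eq_zero hΦ hM he.one_sub
      ((IsSelfAdjoint.one A).sub hse) hcl x hbs
  apply eq_zero_of_peirceProj_eq_zero (e := e)
  simp only [Fin.forall_fin_two]
  refine ⟨⟨?_, ?_⟩, ?_, ?_⟩
  · exact peirceProj_self_addDefect_eq_zero hΦ hM hdiv he hse ha hb 0
  · have hsplit : addDefect Φ a b = addDefect Φ a (b + star b) + addDefect Φ b (star b)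
        - addDefect Φ (a + b) (star b) := by
      simp only [addDefect, add_assoc]
      abel
    rw [hsplit, map_sub, map_add, hS, hS,
      peirceProj_zero_one_addDefect_add_star_eq_zero hΦ hM he hse hsp ha hb, add_zero, sub_zero]
  · exact peirceProj_one_zero_addDefect_eq_zero hΦ hM he hse hsp a hb
  · exact peirceProj_self_addDefect_eq_zero hΦ hM hdiv he hse ha hb 1

theorem addDefect_eq_zero_of_inPeirce (hΦ : HasScaledLeibniz M Φ) (hM : M ≠ 0)
    (hdiv : ∀ a : A, ∃ a', M • a' = a) (he : IsIdempotentElem e) (hse : IsSelfAdjoint e)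
    (hsp : ∀ x : A, (∀ r : A, x * r * e = 0) → x = 0)
    (hcl : ∀ x : A, (∀ r : A, x * r * (1 - e) = 0) → x = 0)
    {i j : Fin 2} (hij : i ≠ j) {a b : A} (ha : inPeirce e i j a) (hb : inPeirce e i j b) :
    addDefect Φ a b = 0 := by
  fin_cases i <;> fin_cases j
  · exact absurd rfl hij
  · exact addDefect_eq_zero_of_inPeirce_zero_one hΦ hM hdiv he hse hsp hcl ha hb
  · refine addDefect_eq_zero_of_inPeirce_zero_one hΦ hM hdiv he.one_sub
      ((IsSelfAdjoint.one A).sub hse) hcl (by rwa [sub_sub_cancel])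
      (inPeirce_one_sub_iff.2 ha) (inPeirce_one_sub_iff.2 hb)
  · exact absurd rfl hij

end OffDiagonal

theorem stmt_7_general {A : Type*} [NonAssocRing A] [Module ℂ A] [StarRing A]
    (halt₁ : ∀ a b : A, a * a * b = a * (a * b))
    (halt₂ : ∀ a b : A, b * a * a = b * (a * a))
    (e : A) (heStar : star e = e) (heIdem : e * e = e)
    (hsp : ∀ x : A, (∀ r : A, x * r * e = 0) → x = 0)
    (hcl : ∀ x : A, (∀ r : A, x * r * (1 - e) = 0) → x = 0)
    (n : ℕ) (hn : 2 ≤ n) (Φ : A → A)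
    (hΦ : ∀ x y : A,
      Φ (leftStarJordan (List.ofFn (lastTwoFamily n x y))) =
        ∑ k : Fin n, leftStarJordan (List.ofFn
          (Function.update (lastTwoFamily n x y) k (Φ (lastTwoFamily n x y k))))) :
    ∀ i j : Fin 2, i ≠ j → ∀ a b : A, inPeirce e i j a → inPeirce e i j b →
      Φ (a + b) = Φ a + Φ b := by
  intro i j hij a b ha hb
  obtain ⟨m, rfl⟩ : ∃ m, n = m + 2 := ⟨n - 2, by omega⟩
  have : IsAlternative A := ⟨halt₁, halt₂⟩
  have : IsAddTorsionFree A := .of_isTorsionFree ℂ A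
  have hM : 2 ^ m ≠ 0 := by positivity
  have hdiv : ∀ a : A, ∃ a', 2 ^ m • a' = a := fun a =>
    ⟨((2 ^ m : ℕ) : ℂ)⁻¹ • a, by
      rw [← Nat.cast_smul_eq_nsmul ℂ, smul_smul, mul_inv_cancel₀ (by exact_mod_cast hM), one_smul]⟩
  have hD := addDefect_eq_zero_of_inPeirce (hasScaledLeibniz_of_lastTwoFamily hΦ) hM hdiv
    heIdem heStar hsp hcl hij ha hb
  rwa [addDefect, sub_sub, sub_eq_zero] at hD

theorem stmt_7 {A : Type*} [NonAssocRing A] [Module ℂ A]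
    [SMulCommClass ℂ A A] [IsScalarTower ℂ A A] [StarRing A]
    (halt₁ : ∀ a b : A, a * a * b = a * (a * b))
    (halt₂ : ∀ a b : A, b * a * a = b * (a * a))
    (e : A) (heStar : star e = e) (heIdem : e * e = e) (he0 : e ≠ 0) (he1 : e ≠ 1)
    (hsp : ∀ x : A, (∀ r : A, x * r * e = 0) → x = 0)
    (hcl : ∀ x : A, (∀ r : A, x * r * (1 - e) = 0) → x = 0)
    (n : ℕ) (hn : 2 ≤ n) (Φ : A → A)
    (hΦ : ∀ x y : A,
      Φ (leftStarJordan (List.ofFn (lastTwoFamily n x y))) =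
        ∑ k : Fin n, leftStarJordan (List.ofFn
          (Function.update (lastTwoFamily n x y) k (Φ (lastTwoFamily n x y k))))) :
    ∀ i j : Fin 2, i ≠ j → ∀ a b : A, inPeirce e i j a → inPeirce e i j b →
      Φ (a + b) = Φ a + Φ b :=
  stmt_7_general halt₁ halt₂ e heStar heIdem hsp hcl n hn Φ hΦ
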